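/- arXiv:1206.0963 — 2 statements merged into one kernel-verified Lean document; each statement's English description precedes it below -/
import Mathlib

section
/- Let c_1 ∈ ℂ with c_1 ≠ 0, let ξ_1 ∈ ℂ, set s_0 = c_1 and s_1 = c_1·ξ_1, and let σ > 0, z ∈ ℂ. Define ν_1 = |s_0|² + |s_1|² − |s_0 + z̄·s_1|²/(1 + |z|²) and μ_1 = (s_0 + z̄·s_1)/(1 + |z|²). Then (1/(πσ²)²) · e^{−ν_1/σ²} · ∫_{ℝ²} |x + iy|² · exp(−|x + iy − μ_1|²·(1 + |z|²)/σ²) dx dy = exp(−ρ·|z − ξ_1|²/(1 + |z|²)) · ( ρ·|1 + z̄·ξ_1|² / (π·(1 + |z|²)³) + 1 / (π·(1 + |z|²)²) ), where ρ = |c_1|²/σ² and z̄ denotes the complex conjugate of z. -/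
/-!
In complex notation the integral is `∫_ℂ |w|² exp(-b|w - μ₁|²)` with `b = (1 + |z|²)/σ²`.
Shifting by `μ₁` and using that the Gaussian weight is even, the cross term of `|w + μ₁|²`
integrates to zero, which leaves `π/b · (|μ₁|² + 1/b)`. Lagrange's identity
`|1 + z̄ξ₁|² + |z - ξ₁|² = (1 + |z|²)(1 + |ξ₁|²)` then rewrites `ν₁` as `|c₁|²|z - ξ₁|²/(1 + |z|²)`,
and the rest is algebra.
-/

open MeasureTheory Real

section EvenWeight

variable {V : Type*} [NormedAddCommGroup V] [InnerProductSpace ℝ V] [MeasurableSpace V]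
  [BorelSpace V] {μ : Measure V} [μ.IsNegInvariant] {e : V → ℝ}

theorem integral_norm_add_sq_mul_of_even (he_even : ∀ v, e (-v) = e v) (he : Integrable e μ)
    (he₂ : Integrable (fun v => ‖v‖ ^ 2 * e v) μ) (a : V) :
    ∫ v, ‖v + a‖ ^ 2 * e v ∂μ = ∫ v, ‖v‖ ^ 2 * e v ∂μ + ‖a‖ ^ 2 * ∫ v, e v ∂μ := by
  have hpar (v : V) : ‖v + a‖ ^ 2 + ‖-v + a‖ ^ 2 = 2 * (‖v‖ ^ 2 + ‖a‖ ^ 2) := by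
    rw [neg_add_eq_sub, norm_sub_rev]
    exact parallelogram_law_with_norm ℝ v a
  have hbound : Integrable (fun v => 2 * (‖v‖ ^ 2 * e v + ‖a‖ ^ 2 * e v)) μ :=
    (he₂.add (he.const_mul _)).const_mul 2
  have hf : Integrable (fun v => ‖v + a‖ ^ 2 * e v) μ := by
    have hmeas : Continuous fun v : V => ‖v + a‖ ^ 2 := by fun_prop
    refine hbound.mono (hmeas.aestronglyMeasurable.mul he.1) (.of_forall fun v => ?_)
    calc ‖‖v + a‖ ^ 2 * e v‖ = ‖v + a‖ ^ 2 * |e v| := by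
          rw [norm_mul, norm_pow, norm_norm, Real.norm_eq_abs]
      _ ≤ 2 * (‖v‖ ^ 2 + ‖a‖ ^ 2) * |e v| := by
          gcongr
          linarith [hpar v, sq_nonneg ‖-v + a‖]
      _ = ‖2 * (‖v‖ ^ 2 * e v + ‖a‖ ^ 2 * e v)‖ := by
          rw [← add_mul, ← mul_assoc, norm_mul, Real.norm_eq_abs (e v),
            Real.norm_of_nonneg (by positivity)]
  -- `v ↦ -v` turns `‖v + a‖²` into `‖v - a‖²`, and the parallelogram law adds the two up
  have hsymm : ∫ v, ‖v + a‖ ^ 2 * e v ∂μ =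
      ∫ v, 2 * (‖v‖ ^ 2 * e v + ‖a‖ ^ 2 * e v) ∂μ - ∫ v, ‖v + a‖ ^ 2 * e v ∂μ := by
    rw [← integral_sub hbound hf, ← integral_neg_eq_self _ μ]
    congr 1 with v
    rw [he_even]
    linear_combination e v * hpar v
  rw [integral_const_mul, integral_add he₂ (he.const_mul _), integral_const_mul] at hsymm
  linarith

end EvenWeight

namespace Complex

variable {b : ℝ}

theorem integral_exp_neg_mul_norm_sq (hb : 0 < b) : ∫ w : ℂ, rexp (-b * ‖w‖ ^ 2) = π / b := by
  rw [GaussianFourier.integral_rexp_neg_mul_sq_norm hb, finrank_real_complex]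
  norm_num

theorem integral_norm_sq_mul_exp_neg_mul_norm_sq (hb : 0 < b) :
    ∫ w : ℂ, ‖w‖ ^ 2 * rexp (-b * ‖w‖ ^ 2) = π / b ^ 2 := by
  have h := integral_rpow_mul_exp_neg_mul_rpow (p := 2) (q := 2) one_le_two (by norm_num) hb
  norm_num [Real.rpow_two, Real.rpow_neg hb.le, ← div_eq_mul_inv] at h
  simpa only [neg_mul] using h

theorem integral_norm_sq_mul_exp_neg_mul_norm_sub_sq (hb : 0 < b) (μ : ℂ) :
    ∫ w : ℂ, ‖w‖ ^ 2 * rexp (-b * ‖w - μ‖ ^ 2) = π / b * (‖μ‖ ^ 2 + 1 / b) := by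
  have he : Integrable fun w : ℂ => rexp (-b * ‖w‖ ^ 2) :=
    .of_integral_ne_zero (by rw [integral_exp_neg_mul_norm_sq hb]; positivity)
  have he₂ : Integrable fun w : ℂ => ‖w‖ ^ 2 * rexp (-b * ‖w‖ ^ 2) :=
    .of_integral_ne_zero (by rw [integral_norm_sq_mul_exp_neg_mul_norm_sq hb]; positivity)
  rw [← integral_add_right_eq_self _ μ]
  simp only [add_sub_cancel_right]
  rw [integral_norm_add_sq_mul_of_even (fun w => by rw [norm_neg]) he he₂,
    integral_norm_sq_mul_exp_neg_mul_norm_sq hb, integral_exp_neg_mul_norm_sq hb]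
  ring

theorem integral_prod_ofReal_add_mul_I {E : Type*} [NormedAddCommGroup E] [NormedSpace ℝ E]
    (f : ℂ → E) : ∫ q : ℝ × ℝ, f (q.1 + q.2 * I) = ∫ w : ℂ, f w := by
  simp_rw [← equivRealProd_symm_apply]
  exact volume_preserving_equiv_real_prod.symm.integral_comp
    measurableEquivRealProd.symm.measurableEmbedding f

theorem norm_one_add_conj_mul_sq_add_norm_sub_sq (z ξ : ℂ) :
    ‖1 + (starRingEnd ℂ) z * ξ‖ ^ 2 + ‖z - ξ‖ ^ 2 = (1 + ‖z‖ ^ 2) * (1 + ‖ξ‖ ^ 2) := by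
  simp only [Complex.sq_norm, normSq_apply, add_re, add_im, sub_re, sub_im, mul_re, mul_im,
    one_re, one_im, conj_re, conj_im]
  ring

end Complex

theorem stmt_5_general (c₁ ξ₁ : ℂ) (σ : ℝ) (hσ : 0 < σ) (z : ℂ)
    (s₀ s₁ : ℂ) (hs₀ : s₀ = c₁) (hs₁ : s₁ = c₁ * ξ₁)
    (ν₁ : ℝ)
    (hν₁ : ν₁ = ‖s₀‖ ^ 2 + ‖s₁‖ ^ 2 -
      ‖s₀ + (starRingEnd ℂ) z * s₁‖ ^ 2 / (1 + ‖z‖ ^ 2))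
    (μ₁ : ℂ)
    (hμ₁ : μ₁ = (s₀ + (starRingEnd ℂ) z * s₁) / ((1 + ‖z‖ ^ 2 : ℝ) : ℂ))
    (ρ : ℝ) (hρ : ρ = ‖c₁‖ ^ 2 / σ ^ 2) :
    (1 / (Real.pi * σ ^ 2) ^ 2) * Real.exp (-ν₁ / σ ^ 2) *
      ∫ q : ℝ × ℝ,
        ‖(q.1 : ℂ) + q.2 * Complex.I‖ ^ 2 *
          Real.exp (-(‖(q.1 : ℂ) + q.2 * Complex.I - μ₁‖ ^ 2 *
            (1 + ‖z‖ ^ 2) / σ ^ 2)) =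
    Real.exp (-(ρ * ‖z - ξ₁‖ ^ 2 / (1 + ‖z‖ ^ 2))) *
      (ρ * ‖1 + (starRingEnd ℂ) z * ξ₁‖ ^ 2 /
          (Real.pi * (1 + ‖z‖ ^ 2) ^ 3) +
        1 / (Real.pi * (1 + ‖z‖ ^ 2) ^ 2)) := by
  have ht : 0 < 1 + ‖z‖ ^ 2 := by positivity
  have hb : 0 < (1 + ‖z‖ ^ 2) / σ ^ 2 := by positivity
  have hs : s₀ + (starRingEnd ℂ) z * s₁ = c₁ * (1 + (starRingEnd ℂ) z * ξ₁) := by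
    rw [hs₀, hs₁]; ring
  have hμ : ‖μ₁‖ ^ 2 = ‖c₁‖ ^ 2 * ‖1 + (starRingEnd ℂ) z * ξ₁‖ ^ 2 / (1 + ‖z‖ ^ 2) ^ 2 := by
    rw [hμ₁, hs, norm_div, norm_mul, Complex.norm_real, Real.norm_of_nonneg ht.le,
      div_pow, mul_pow]
  have hν : -ν₁ / σ ^ 2 = -(ρ * ‖z - ξ₁‖ ^ 2 / (1 + ‖z‖ ^ 2)) := by
    rw [hν₁, hs, hs₀, hs₁, norm_mul, norm_mul, hρ]
    field_simp
    linear_combination ‖c₁‖ ^ 2 * Complex.norm_one_add_conj_mul_sq_add_norm_sub_sq z ξ₁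
  have hI : ∫ q : ℝ × ℝ, ‖(q.1 : ℂ) + q.2 * Complex.I‖ ^ 2 *
      Real.exp (-(‖(q.1 : ℂ) + q.2 * Complex.I - μ₁‖ ^ 2 * (1 + ‖z‖ ^ 2) / σ ^ 2)) =
      π / ((1 + ‖z‖ ^ 2) / σ ^ 2) * (‖μ₁‖ ^ 2 + 1 / ((1 + ‖z‖ ^ 2) / σ ^ 2)) := by
    refine (Complex.integral_prod_ofReal_add_mul_I
      fun w => ‖w‖ ^ 2 * rexp (-(‖w - μ₁‖ ^ 2 * (1 + ‖z‖ ^ 2) / σ ^ 2))).trans ?_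
    rw [← Complex.integral_norm_sq_mul_exp_neg_mul_norm_sub_sq hb μ₁]
    congr 1 with w
    ring_nf
  rw [hν, hI, hμ, hρ]
  field_simp

/-- Lemma 1.3: closed form of the condensed density `h₂⁽¹⁾(z,σ)`
for `n = 2`, with `s₀ = c₁`, `s₁ = c₁ ξ₁` and SNR `ρ = |c₁|²/σ²`. -/
theorem stmt_5 (c₁ ξ₁ : ℂ) (hc : c₁ ≠ 0) (σ : ℝ) (hσ : 0 < σ) (z : ℂ)
    (s₀ s₁ : ℂ) (hs₀ : s₀ = c₁) (hs₁ : s₁ = c₁ * ξ₁)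
    (ν₁ : ℝ)
    (hν₁ : ν₁ = ‖s₀‖ ^ 2 + ‖s₁‖ ^ 2 -
      ‖s₀ + (starRingEnd ℂ) z * s₁‖ ^ 2 / (1 + ‖z‖ ^ 2))
    (μ₁ : ℂ)
    (hμ₁ : μ₁ = (s₀ + (starRingEnd ℂ) z * s₁) / ((1 + ‖z‖ ^ 2 : ℝ) : ℂ))
    (ρ : ℝ) (hρ : ρ = ‖c₁‖ ^ 2 / σ ^ 2) :
    (1 / (Real.pi * σ ^ 2) ^ 2) * Real.exp (-ν₁ / σ ^ 2) *
      ∫ q : ℝ × ℝ,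
        ‖(q.1 : ℂ) + q.2 * Complex.I‖ ^ 2 *
          Real.exp (-(‖(q.1 : ℂ) + q.2 * Complex.I - μ₁‖ ^ 2 *
            (1 + ‖z‖ ^ 2) / σ ^ 2)) =
    Real.exp (-(ρ * ‖z - ξ₁‖ ^ 2 / (1 + ‖z‖ ^ 2))) *
      (ρ * ‖1 + (starRingEnd ℂ) z * ξ₁‖ ^ 2 /
          (Real.pi * (1 + ‖z‖ ^ 2) ^ 3) +
        1 / (Real.pi * (1 + ‖z‖ ^ 2) ^ 2)) :=
  stmt_5_general c₁ ξ₁ σ hσ z s₀ s₁ hs₀ hs₁ ν₁ hν₁ μ₁ hμ₁ ρ hρ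
end

section
/- Let p : ℝ² → ℝ and a : ℝ² → ℝ be smooth with p(x,y) > 0 and a(x,y) > 0 everywhere, let Ψ : ℝ → ℝ be twice continuously differentiable with Ψ'' > 0 and Ψ'(1) = 0, and let h : ℝ² × (0,∞) → ℝ be smooth, positive, and satisfy the anisotropic diffusion equation ∂h/∂t = div( a·∇(h/p) ) (divergence and gradient in the spatial variables). Assume in addition that for each t > 0: (i) differentiation under the integral sign is valid for ∫_{ℝ²} p·Ψ(h/p) dx dy, and (ii) the vector field Ψ'(h/p)·a·∇(h/p) is C¹ with integrable divergence whose integral over ℝ² vanishes (e.g. it decays at infinity). Then the Csiszár distance D(h,p)(t) = ∫_{ℝ²} p(x,y)·Ψ( h(x,y,t)/p(x,y) ) dx dy satisfies dD/dt = −∫_{ℝ²} a(x,y)·Ψ''( h(x,y,t)/p(x,y) )·‖∇( h(x,y,t)/p(x,y) )‖² dx dy ≤ 0; in particular D(h,p) is non-increasing in t, and strictly decreasing at any time t at which h(·,·,t)/p is non-constant. -/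
open MeasureTheory

private lemma aux_fderiv_mul (F G : ℝ × ℝ → ℝ) (q v : ℝ × ℝ)
    (hF : DifferentiableAt ℝ F q) (hG : DifferentiableAt ℝ G q) :
    fderiv ℝ (fun x => F x * G x) q v = F q * fderiv ℝ G q v + G q * fderiv ℝ F q v := by
  rw [fderiv_fun_mul hF hG]
  simp [smul_eq_mul]

private lemma aux_fderiv_comp (g : ℝ → ℝ) (u : ℝ × ℝ → ℝ) (q v : ℝ × ℝ)
    (hg : DifferentiableAt ℝ g (u q)) (hu : DifferentiableAt ℝ u q) :
    fderiv ℝ (fun x => g (u x)) q v = deriv g (u q) * fderiv ℝ u q v := by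
  have h1 := (hg.hasDerivAt.hasFDerivAt.comp q hu.hasFDerivAt).fderiv
  show fderiv ℝ (g ∘ u) q v = _
  rw [h1]
  simp [mul_comm]

/-- Lemma 3.1: monotone decay of the Csiszár distance
`D(h,p)(t) = ∫ p Ψ(h/p)` along the anisotropic diffusion
`∂h/∂t = div(a ∇(h/p))`.  Partial derivatives in the plane are expressed via
`fderiv` applied to the directions `(1,0)` and `(0,1)`. -/
theorem stmt_12
    (p a : ℝ × ℝ → ℝ) (Ψ : ℝ → ℝ) (h : ℝ × ℝ → ℝ → ℝ)
    (hp : ContDiff ℝ (⊤ : ℕ∞) p) (ha : ContDiff ℝ (⊤ : ℕ∞) a)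
    (hppos : ∀ q, 0 < p q) (hapos : ∀ q, 0 < a q)
    (hΨ : ContDiff ℝ 2 Ψ) (hΨ'' : ∀ x, 0 < deriv (deriv Ψ) x)
    (hΨ'1 : deriv Ψ 1 = 0)
    (hsmooth : ContDiff ℝ (⊤ : ℕ∞) (fun q : (ℝ × ℝ) × ℝ => h q.1 q.2))
    (hhpos : ∀ q t, 0 < t → 0 < h q t)
    (w : ℝ × ℝ → ℝ → ℝ) (hw : ∀ q t, w q t = h q t / p q)
    -- the anisotropic diffusion equation `h_t = div (a ∇ (h/p))`
    (hPDE : ∀ q t, 0 < t →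
      deriv (fun τ => h q τ) t =
        fderiv ℝ (fun q' => a q' * fderiv ℝ (fun q'' => w q'' t) q' (1, 0)) q (1, 0) +
        fderiv ℝ (fun q' => a q' * fderiv ℝ (fun q'' => w q'' t) q' (0, 1)) q (0, 1))
    -- the Csiszár distance
    (D : ℝ → ℝ) (hD : ∀ t, D t = ∫ q : ℝ × ℝ, p q * Ψ (w q t))
    -- (i) differentiation under the integral sign is valid
    (hDunder : ∀ t, 0 < t →
      HasDerivAt D (∫ q : ℝ × ℝ, deriv Ψ (w q t) * deriv (fun τ => h q τ) t) t)
    -- (ii) the vector field `Ψ'(h/p) a ∇(h/p)` has integrable divergence with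
    -- vanishing integral over ℝ² (divergence theorem / decay at infinity)
    (hdivint : ∀ t, 0 < t →
      Integrable (fun q : ℝ × ℝ =>
        fderiv ℝ (fun q' => deriv Ψ (w q' t) * a q' *
          fderiv ℝ (fun q'' => w q'' t) q' (1, 0)) q (1, 0) +
        fderiv ℝ (fun q' => deriv Ψ (w q' t) * a q' *
          fderiv ℝ (fun q'' => w q'' t) q' (0, 1)) q (0, 1)))
    (hdivzero : ∀ t, 0 < t →
      (∫ q : ℝ × ℝ,
        (fderiv ℝ (fun q' => deriv Ψ (w q' t) * a q' *
          fderiv ℝ (fun q'' => w q'' t) q' (1, 0)) q (1, 0) +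
         fderiv ℝ (fun q' => deriv Ψ (w q' t) * a q' *
          fderiv ℝ (fun q'' => w q'' t) q' (0, 1)) q (0, 1))) = 0)
    -- integrability of the entropy-production integrand
    (hprodint : ∀ t, 0 < t →
      Integrable (fun q : ℝ × ℝ =>
        a q * deriv (deriv Ψ) (w q t) *
          ((fderiv ℝ (fun q'' => w q'' t) q (1, 0)) ^ 2 +
           (fderiv ℝ (fun q'' => w q'' t) q (0, 1)) ^ 2))) :
    ∀ t, 0 < t →
      HasDerivAt D
        (-(∫ q : ℝ × ℝ, a q * deriv (deriv Ψ) (w q t) *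
          ((fderiv ℝ (fun q'' => w q'' t) q (1, 0)) ^ 2 +
           (fderiv ℝ (fun q'' => w q'' t) q (0, 1)) ^ 2))) t ∧
      deriv D t ≤ 0 ∧
      ((∃ q₁ q₂ : ℝ × ℝ, w q₁ t ≠ w q₂ t) → deriv D t < 0) := by
  intro t ht
  -- smoothness of the spatial slice `q ↦ w q t`
  have huw : (fun q : ℝ × ℝ => w q t) = fun q => h q t / p q := funext fun q => hw q t
  have hht : ContDiff ℝ (⊤ : ℕ∞) (fun q : ℝ × ℝ => h q t) :=
    hsmooth.comp (contDiff_id.prodMk contDiff_const)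
  have hu : ContDiff ℝ (⊤ : ℕ∞) (fun q : ℝ × ℝ => w q t) := by
    rw [huw]; exact hht.div hp (fun q => (hppos q).ne')
  have hdu : ContDiff ℝ (⊤ : ℕ∞) (fderiv ℝ (fun q : ℝ × ℝ => w q t)) :=
    hu.fderiv_right (by simp)
  have hduv : ∀ v : ℝ × ℝ, ContDiff ℝ (⊤ : ℕ∞) (fun q => fderiv ℝ (fun q'' => w q'' t) q v) :=
    fun v => hdu.clm_apply contDiff_const
  -- derivatives of Ψ
  have hΨ1 : ContDiff ℝ 1 (deriv Ψ) := by
    have h2 : ContDiff ℝ ((1 : WithTop ℕ∞) + 1) Ψ := by norm_num; exact hΨ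
    exact (contDiff_succ_iff_deriv.mp h2).2.2
  have hΨ''cont : Continuous (deriv (deriv Ψ)) := hΨ1.continuous_deriv le_rfl
  -- the key pointwise product/chain rule identity in each direction
  have key : ∀ (v q : ℝ × ℝ),
      fderiv ℝ (fun q' => deriv Ψ (w q' t) * a q' *
        fderiv ℝ (fun q'' => w q'' t) q' v) q v
      = deriv Ψ (w q t) *
          fderiv ℝ (fun q' => a q' * fderiv ℝ (fun q'' => w q'' t) q' v) q v
        + a q * deriv (deriv Ψ) (w q t) * (fderiv ℝ (fun q'' => w q'' t) q v) ^ 2 := by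
    intro v q
    have hF : DifferentiableAt ℝ (fun q' => deriv Ψ (w q' t)) q :=
      DifferentiableAt.comp (g := deriv Ψ) q (hΨ1.differentiable one_ne_zero (w q t)) (hu.differentiable (by simp) q)
    have hG : DifferentiableAt ℝ (fun q' => a q' * fderiv ℝ (fun q'' => w q'' t) q' v) q :=
      (ha.differentiable (by simp) q).mul ((hduv v).differentiable (by simp) q)
    have e1 : (fun q' => deriv Ψ (w q' t) * a q' * fderiv ℝ (fun q'' => w q'' t) q' v)
        = fun q' => (deriv Ψ (w q' t)) * (a q' * fderiv ℝ (fun q'' => w q'' t) q' v) := by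
      funext q'; ring
    rw [e1, aux_fderiv_mul _ _ q v hF hG,
      aux_fderiv_comp (deriv Ψ) (fun q'' => w q'' t) q v
        (hΨ1.differentiable one_ne_zero (w q t)) (hu.differentiable (by simp) q)]
    ring
  -- pointwise identity: Ψ'(w) h_t = div(Ψ'(w) a ∇w) − a Ψ''(w) |∇w|²
  have pointwise : ∀ q : ℝ × ℝ,
      deriv Ψ (w q t) * deriv (fun τ => h q τ) t =
      (fderiv ℝ (fun q' => deriv Ψ (w q' t) * a q' *
          fderiv ℝ (fun q'' => w q'' t) q' (1, 0)) q (1, 0) +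
        fderiv ℝ (fun q' => deriv Ψ (w q' t) * a q' *
          fderiv ℝ (fun q'' => w q'' t) q' (0, 1)) q (0, 1)) -
      (a q * deriv (deriv Ψ) (w q t) *
        ((fderiv ℝ (fun q'' => w q'' t) q (1, 0)) ^ 2 +
         (fderiv ℝ (fun q'' => w q'' t) q (0, 1)) ^ 2)) := by
    intro q
    rw [hPDE q t ht, key (1, 0) q, key (0, 1) q]
    ring
  -- the integral identity
  have hint_eq : (∫ q : ℝ × ℝ, deriv Ψ (w q t) * deriv (fun τ => h q τ) t)
      = -(∫ q : ℝ × ℝ, a q * deriv (deriv Ψ) (w q t) *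
          ((fderiv ℝ (fun q'' => w q'' t) q (1, 0)) ^ 2 +
           (fderiv ℝ (fun q'' => w q'' t) q (0, 1)) ^ 2)) := by
    rw [show (fun q : ℝ × ℝ => deriv Ψ (w q t) * deriv (fun τ => h q τ) t)
        = fun q : ℝ × ℝ =>
          (fderiv ℝ (fun q' => deriv Ψ (w q' t) * a q' *
              fderiv ℝ (fun q'' => w q'' t) q' (1, 0)) q (1, 0) +
            fderiv ℝ (fun q' => deriv Ψ (w q' t) * a q' *
              fderiv ℝ (fun q'' => w q'' t) q' (0, 1)) q (0, 1)) -
          (a q * deriv (deriv Ψ) (w q t) *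
            ((fderiv ℝ (fun q'' => w q'' t) q (1, 0)) ^ 2 +
             (fderiv ℝ (fun q'' => w q'' t) q (0, 1)) ^ 2)) from funext pointwise]
    rw [integral_sub (hdivint t ht) (hprodint t ht), hdivzero t ht, zero_sub]
  have hDeriv : HasDerivAt D
      (-(∫ q : ℝ × ℝ, a q * deriv (deriv Ψ) (w q t) *
        ((fderiv ℝ (fun q'' => w q'' t) q (1, 0)) ^ 2 +
         (fderiv ℝ (fun q'' => w q'' t) q (0, 1)) ^ 2))) t := hint_eq ▸ hDunder t ht
  -- nonnegativity of the entropy production integrand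
  have hnonneg : ∀ q : ℝ × ℝ, 0 ≤ a q * deriv (deriv Ψ) (w q t) *
      ((fderiv ℝ (fun q'' => w q'' t) q (1, 0)) ^ 2 +
       (fderiv ℝ (fun q'' => w q'' t) q (0, 1)) ^ 2) :=
    fun q => mul_nonneg (mul_nonneg (hapos q).le (hΨ'' _).le)
      (by positivity)
  have hP0 : 0 ≤ ∫ q : ℝ × ℝ, a q * deriv (deriv Ψ) (w q t) *
      ((fderiv ℝ (fun q'' => w q'' t) q (1, 0)) ^ 2 +
       (fderiv ℝ (fun q'' => w q'' t) q (0, 1)) ^ 2) := integral_nonneg hnonneg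
  refine ⟨hDeriv, ?_, ?_⟩
  · rw [hDeriv.deriv]; linarith
  · rintro ⟨q₁, q₂, hne⟩
    rw [hDeriv.deriv]
    -- find a point where the gradient is nonzero
    have hexists : ∃ q : ℝ × ℝ, fderiv ℝ (fun q'' => w q'' t) q (1, 0) ≠ 0 ∨
        fderiv ℝ (fun q'' => w q'' t) q (0, 1) ≠ 0 := by
      by_contra hc
      push_neg at hc
      have hzero : ∀ q, fderiv ℝ (fun q'' => w q'' t) q = 0 := by
        intro q
        obtain ⟨h1, h2⟩ := hc q
        apply ContinuousLinearMap.ext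
        intro v
        have hv : v = v.1 • ((1 : ℝ), (0 : ℝ)) + v.2 • ((0 : ℝ), (1 : ℝ)) := by
          apply Prod.ext <;> simp
        rw [hv]
        simp only [map_add, _root_.map_smul, h1, h2, smul_zero, add_zero]
        simp
      exact hne (is_const_of_fderiv_eq_zero (𝕜 := ℝ) (hu.differentiable (by simp)) hzero q₁ q₂)
    obtain ⟨q₀, hq₀⟩ := hexists
    set f : ℝ × ℝ → ℝ := fun q => a q * deriv (deriv Ψ) (w q t) *
      ((fderiv ℝ (fun q'' => w q'' t) q (1, 0)) ^ 2 +
       (fderiv ℝ (fun q'' => w q'' t) q (0, 1)) ^ 2) with hf_def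
    have hfq₀ : 0 < f q₀ := by
      have hsq : 0 < (fderiv ℝ (fun q'' => w q'' t) q₀ (1, 0)) ^ 2 +
          (fderiv ℝ (fun q'' => w q'' t) q₀ (0, 1)) ^ 2 := by
        rcases hq₀ with h1 | h2
        · have := pow_pos (abs_pos.mpr h1) 2
          rw [← sq_abs]
          nlinarith [sq_nonneg (fderiv ℝ (fun q'' => w q'' t) q₀ (0, 1))]
        · have := pow_pos (abs_pos.mpr h2) 2
          nlinarith [sq_nonneg (fderiv ℝ (fun q'' => w q'' t) q₀ (1, 0)), sq_abs (fderiv ℝ (fun q'' => w q'' t) q₀ (0, 1))]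
      exact mul_pos (mul_pos (hapos q₀) (hΨ'' _)) hsq
    have hfc : Continuous f := by
      exact ((ha.continuous.mul (hΨ''cont.comp hu.continuous)).mul
        (((hduv (1, 0)).continuous.pow 2).add ((hduv (0, 1)).continuous.pow 2)))
    have hP : 0 < ∫ q : ℝ × ℝ, f q := by
      rw [integral_pos_iff_support_of_nonneg hnonneg (hprodint t ht)]
      have hopen : IsOpen (Function.support f) := by
        rw [Function.support_eq_preimage]
        exact isOpen_compl_singleton.preimage hfc
      exact hopen.measure_pos volume ⟨q₀, Function.mem_support.mpr hfq₀.ne'⟩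
    linarith
end
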